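/- Fix δ ∈ (0,1) and ε > 0. Then, as the integer N → ∞, the cumulative weight up to level ⌊ log log N / (log 2 + ε) ⌋ tends to 0: Σ_{ℓ=0}^{⌊ log log N / (log 2 + ε) ⌋} p_ℓ^{(N,δ)} → 0. In particular, for all sufficiently large N, any k with Σ_{ℓ=0}^{k} p_ℓ^{(N,δ)} ≥ 1/2 satisfies k > log log N / (log 2 + ε). -/

import Mathlib

/-!
Write `s = 1 - ρ`. The weight `p_{k+1}` is the positive root of `p² + a p = ρ p_k` with
`a = -s + 2 Σ_{ℓ ≤ k} p_ℓ ≥ -s`, hence `p_{k+1} ≤ √p_k + s`, and by induction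
`p_k ≤ 3 s ^ 2⁻ᵏ`. For `s = N ^ (-δ)` and `K ≤ log log N / (log 2 + ε)` one has
`2⁻ᴷ log N ≥ (log N) ^ c ≥ c log log N` with `c = ε / (log 2 + ε)`, so the `K + 1` first weights
sum to `O(log log N · (log N) ^ (-δ c)) → 0`. Since the partial sums increase in `k`, a level with
cumulative weight `≥ 1/2` must eventually lie above `log log N / (log 2 + ε)`.
-/

open Filter Finset

namespace MullerRatchet14

/-- Auxiliary recursion computing the pair `(p_k, Σ_{ℓ≤k} p_ℓ)` of the equilibrium
type-frequency weights of the tournament ratchet. -/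
noncomputable def pAux (ρ : ℝ) : ℕ → ℝ × ℝ
  | 0 => (1 - ρ, 1 - ρ)
  | k+1 =>
    let a := ρ - 1 + 2 * (pAux ρ k).2
    let p := -(1/2) * a + Real.sqrt ((1/4) * a^2 + ρ * (pAux ρ k).1)
    (p, (pAux ρ k).2 + p)

/-- The equilibrium weight `p_k^{(ρ)}`. -/
noncomputable def pseq (ρ : ℝ) (k : ℕ) : ℝ := (pAux ρ k).1

open Real Topology

lemma pseq_zero (ρ : ℝ) : pseq ρ 0 = 1 - ρ := rfl

lemma pAux_snd_eq_sum (ρ : ℝ) (k : ℕ) : (pAux ρ k).2 = ∑ l ∈ range (k + 1), pseq ρ l := by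
  induction k with
  | zero => simp [pAux, pseq]
  | succ k ih => rw [sum_range_succ, ← ih]; rfl

lemma pseq_succ (ρ : ℝ) (k : ℕ) :
    pseq ρ (k + 1) =
      -(1/2) * (ρ - 1 + 2 * ∑ l ∈ range (k + 1), pseq ρ l) +
        √((1/4) * (ρ - 1 + 2 * ∑ l ∈ range (k + 1), pseq ρ l) ^ 2 + ρ * pseq ρ k) := by
  rw [← pAux_snd_eq_sum]; rfl

lemma neg_half_mul_add_sqrt_nonneg (a : ℝ) {x : ℝ} (hx : 0 ≤ x) :
    0 ≤ -(1/2) * a + √((1/4) * a ^ 2 + x) := by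
  have : |a / 2| ≤ √((1/4) * a ^ 2 + x) := abs_le_sqrt (by nlinarith)
  linarith [le_abs_self (a / 2)]

lemma neg_half_mul_add_sqrt_le {a s x : ℝ} (hs : 0 ≤ s) (ha : -s ≤ a) (hx : 0 ≤ x) :
    -(1/2) * a + √((1/4) * a ^ 2 + x) ≤ √x + s := by
  have hsa : 0 ≤ s + a / 2 := by linarith
  have : √((1/4) * a ^ 2 + x) ≤ √x + (s + a / 2) := by
    rw [sqrt_le_left (by positivity)]
    nlinarith [sq_sqrt hx, mul_nonneg (sqrt_nonneg x) hsa, mul_nonneg hs (by linarith : 0 ≤ s + a)]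
  linarith

section Equilibrium

variable {ρ : ℝ} (hρ0 : 0 ≤ ρ) (hρ1 : ρ ≤ 1)
include hρ0 hρ1

lemma pseq_nonneg (k : ℕ) : 0 ≤ pseq ρ k := by
  induction k with
  | zero => rw [pseq_zero]; linarith
  | succ k ih => rw [pseq_succ]; exact neg_half_mul_add_sqrt_nonneg _ (mul_nonneg hρ0 ih)

lemma monotone_sum_range_pseq : Monotone fun k => ∑ l ∈ range (k + 1), pseq ρ l :=
  fun _ _ hkm => sum_le_sum_of_subset_of_nonneg (range_subset_range.mpr (by omega))
    fun l _ _ => pseq_nonneg hρ0 hρ1 l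

lemma pseq_succ_le (k : ℕ) : pseq ρ (k + 1) ≤ √(pseq ρ k) + (1 - ρ) := by
  have hp := pseq_nonneg hρ0 hρ1 k
  have hS : 0 ≤ ∑ l ∈ range (k + 1), pseq ρ l := sum_nonneg fun l _ => pseq_nonneg hρ0 hρ1 l
  rw [pseq_succ]
  refine (neg_half_mul_add_sqrt_le (s := 1 - ρ) (by linarith) (by linarith)
    (mul_nonneg hρ0 hp)).trans ?_
  gcongr
  exact mul_le_of_le_one_left hp hρ1

lemma pseq_le_rpow (k : ℕ) : pseq ρ k ≤ 3 * (1 - ρ) ^ ((2 : ℝ)⁻¹ ^ k) := by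
  have hs0 : 0 ≤ 1 - ρ := by linarith
  induction k with
  | zero => rw [pseq_zero, pow_zero, rpow_one]; linarith
  | succ k ih =>
    set t := (1 - ρ) ^ ((2 : ℝ)⁻¹ ^ (k + 1))
    have ht : 0 ≤ t := rpow_nonneg hs0 _
    have hsqrt : √((1 - ρ) ^ ((2 : ℝ)⁻¹ ^ k)) = t := by
      rw [sqrt_eq_rpow, ← rpow_mul hs0, one_div, ← pow_succ]
    have hst : 1 - ρ ≤ t :=
      calc 1 - ρ = (1 - ρ) ^ (1 : ℝ) := (rpow_one _).symm
        _ ≤ t := rpow_le_rpow_of_exponent_ge' hs0 (by linarith) (by positivity)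
          (pow_le_one₀ (by norm_num) (by norm_num))
    have h3 : √3 ≤ 2 := by rw [sqrt_le_left (by norm_num)]; norm_num
    calc pseq ρ (k + 1) ≤ √(pseq ρ k) + (1 - ρ) := pseq_succ_le hρ0 hρ1 k
      _ ≤ √3 * t + t := by
        refine add_le_add ?_ hst
        rw [← hsqrt, ← sqrt_mul (by norm_num)]
        exact sqrt_le_sqrt ih
      _ ≤ 3 * t := by nlinarith

lemma sum_range_pseq_le (K : ℕ) :
    ∑ l ∈ range (K + 1), pseq ρ l ≤ 3 * (K + 1) * (1 - ρ) ^ ((2 : ℝ)⁻¹ ^ K) := by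
  have hs0 : 0 ≤ 1 - ρ := by linarith
  calc ∑ l ∈ range (K + 1), pseq ρ l
      ≤ ∑ _l ∈ range (K + 1), 3 * (1 - ρ) ^ ((2 : ℝ)⁻¹ ^ K) := by
        refine sum_le_sum fun l hl => (pseq_le_rpow hρ0 hρ1 l).trans ?_
        gcongr 3 * ?_
        exact rpow_le_rpow_of_exponent_ge' hs0 (by linarith) (by positivity)
          (pow_le_pow_of_le_one (by norm_num) (by norm_num) (mem_range_succ_iff.mp hl))
    _ = 3 * (K + 1) * (1 - ρ) ^ ((2 : ℝ)⁻¹ ^ K) := by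
        rw [sum_const, card_range, nsmul_eq_mul]; push_cast; ring

end Equilibrium

lemma tendsto_affine_mul_exp_neg_mul_atTop {a : ℝ} (ha : 0 < a) (b : ℝ) :
    Tendsto (fun L : ℝ => (b * L + 1) * exp (-a * L)) atTop (𝓝 0) := by
  have h1 := tendsto_rpow_mul_exp_neg_mul_atTop_nhds_zero 1 a ha
  have h0 := tendsto_rpow_mul_exp_neg_mul_atTop_nhds_zero 0 a ha
  simpa [add_mul, mul_assoc] using (h1.const_mul b).add h0

lemma one_sub_rpow_neg_nonneg {x δ : ℝ} (hx : 1 ≤ x) (hδ : 0 ≤ δ) : 0 ≤ 1 - x ^ (-δ) :=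
  sub_nonneg.mpr (rpow_le_one_of_one_le_of_nonpos hx (by linarith))

lemma one_sub_rpow_neg_le_one {x : ℝ} (hx : 0 ≤ x) (δ : ℝ) : 1 - x ^ (-δ) ≤ 1 :=
  sub_le_self _ (rpow_nonneg hx _)

lemma rpow_neg_rpow_inv_two_pow_le {δ ε x : ℝ} {K : ℕ} (hδ : 0 ≤ δ) (hε : 0 < ε) (hx : 1 < x)
    (hK : (K : ℝ) ≤ log (log x) / (log 2 + ε)) :
    (x ^ (-δ)) ^ ((2 : ℝ)⁻¹ ^ K) ≤ exp (-(δ * (ε / (log 2 + ε))) * log (log x)) := by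
  set L := log (log x)
  set c := ε / (log 2 + ε)
  have hlogx : 0 < log x := log_pos hx
  have hlog2 : 0 < log 2 := log_pos one_lt_two
  have hexponent : c * L ≤ L - K * log 2 := by
    have hKlog2 : (K : ℝ) * log 2 ≤ L / (log 2 + ε) * log 2 :=
      mul_le_mul_of_nonneg_right hK hlog2.le
    have hcL : L - L / (log 2 + ε) * log 2 = c * L := by
      simp only [c]
      field_simp
      ring
    linarith
  have hscale : c * L ≤ log x * (2 : ℝ)⁻¹ ^ K :=
    calc c * L ≤ exp (c * L) := by linarith [add_one_le_exp (c * L)]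
      _ ≤ exp (L - K * log 2) := exp_le_exp.mpr hexponent
      _ = log x * (2 : ℝ)⁻¹ ^ K := by
        rw [exp_sub, exp_log hlogx, exp_nat_mul, exp_log two_pos, inv_pow, div_eq_mul_inv]
  rw [← rpow_mul (by linarith), rpow_def_of_pos (by linarith), exp_le_exp]
  nlinarith [mul_le_mul_of_nonneg_left hscale hδ]

lemma sum_range_pseq_floor_le {δ ε x : ℝ} (hδ : 0 ≤ δ) (hε : 0 < ε) (hx : exp 1 ≤ x) :
    ∑ l ∈ range (⌊log (log x) / (log 2 + ε)⌋₊ + 1), pseq (1 - x ^ (-δ)) l ≤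
      3 * (((log 2 + ε)⁻¹ * log (log x) + 1) *
        exp (-(δ * (ε / (log 2 + ε))) * log (log x))) := by
  have hx1 : 1 < x := (one_lt_exp_iff.mpr one_pos).trans_le hx
  have hL : 0 ≤ log (log x) := log_nonneg (by rwa [le_log_iff_exp_le (by linarith)])
  set K := ⌊log (log x) / (log 2 + ε)⌋₊
  have hK : (K : ℝ) ≤ log (log x) / (log 2 + ε) :=
    Nat.floor_le (div_nonneg hL (by positivity))
  calc ∑ l ∈ range (K + 1), pseq (1 - x ^ (-δ)) l
      ≤ 3 * (K + 1) * (1 - (1 - x ^ (-δ))) ^ ((2 : ℝ)⁻¹ ^ K) :=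
        sum_range_pseq_le (one_sub_rpow_neg_nonneg hx1.le hδ)
          (one_sub_rpow_neg_le_one (by linarith) δ) K
    _ = 3 * ((K + 1) * (x ^ (-δ)) ^ ((2 : ℝ)⁻¹ ^ K)) := by rw [sub_sub_cancel]; ring
    _ ≤ _ := by
      gcongr
      · rw [← div_eq_inv_mul]; exact hK
      · exact rpow_neg_rpow_inv_two_pow_le hδ hε hx1 hK

theorem statement14_general (δ ε : ℝ) (hδ0 : 0 < δ) (hε : 0 < ε) :
    Tendsto (fun N : ℕ =>
        ∑ l ∈ Finset.range (⌊Real.log (Real.log N) / (Real.log 2 + ε)⌋₊ + 1),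
          pseq (1 - (N:ℝ)^(-δ)) l) atTop (nhds 0) ∧
    ∃ N₀ : ℕ, ∀ N : ℕ, N₀ ≤ N → ∀ k : ℕ,
      1/2 ≤ ∑ l ∈ Finset.range (k+1), pseq (1 - (N:ℝ)^(-δ)) l →
      Real.log (Real.log N) / (Real.log 2 + ε) < (k : ℝ) := by
  have hlarge : ∀ᶠ N : ℕ in atTop, exp 1 ≤ N :=
    tendsto_natCast_atTop_atTop.eventually_ge_atTop _
  have hρ (N : ℕ) (hN : exp 1 ≤ N) : 0 ≤ 1 - (N : ℝ) ^ (-δ) ∧ 1 - (N : ℝ) ^ (-δ) ≤ 1 :=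
    ⟨one_sub_rpow_neg_nonneg (le_trans (one_le_exp zero_le_one) hN) hδ0.le,
      one_sub_rpow_neg_le_one N.cast_nonneg δ⟩
  have hbound := ((tendsto_affine_mul_exp_neg_mul_atTop
    (a := δ * (ε / (log 2 + ε))) (by positivity) (log 2 + ε)⁻¹).const_mul 3).comp
    (tendsto_log_atTop.comp (tendsto_log_atTop.comp tendsto_natCast_atTop_atTop))
  rw [mul_zero] at hbound
  have hlim := squeeze_zero'
    (hlarge.mono fun N hN => sum_nonneg fun l _ => pseq_nonneg (hρ N hN).1 (hρ N hN).2 l)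
    (hlarge.mono fun N hN => sum_range_pseq_floor_le hδ0.le hε hN) hbound
  refine ⟨hlim, ?_⟩
  obtain ⟨N₀, hN₀⟩ := eventually_atTop.mp ((hlim.eventually_lt_const one_half_pos).and hlarge)
  refine ⟨N₀, fun N hN k hk => ?_⟩
  obtain ⟨hsmall, hNlarge⟩ := hN₀ N hN
  by_contra! hkK
  exact hsmall.not_ge <| hk.trans <|
    monotone_sum_range_pseq (hρ N hNlarge).1 (hρ N hNlarge).2 (Nat.le_floor hkK)

/-- For fixed `δ ∈ (0,1)` and `ε > 0`, the cumulative weight of `p^{(N,δ)}` up to level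
`⌊log log N/(log 2 + ε)⌋` tends to `0`; in particular, eventually any `k` with cumulative
weight at least `1/2` satisfies `k > log log N/(log 2 + ε)`. -/
theorem statement14 (δ ε : ℝ) (hδ0 : 0 < δ) (hδ1 : δ < 1) (hε : 0 < ε) :
    Tendsto (fun N : ℕ =>
        ∑ l ∈ Finset.range (⌊Real.log (Real.log N) / (Real.log 2 + ε)⌋₊ + 1),
          pseq (1 - (N:ℝ)^(-δ)) l) atTop (nhds 0) ∧
    ∃ N₀ : ℕ, ∀ N : ℕ, N₀ ≤ N → ∀ k : ℕ,
      1/2 ≤ ∑ l ∈ Finset.range (k+1), pseq (1 - (N:ℝ)^(-δ)) l →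
      Real.log (Real.log N) / (Real.log 2 + ε) < (k : ℝ) :=
  statement14_general δ ε hδ0 hε

end MullerRatchet14
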